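/- Let d, d_E ≥ 1, let ρ be any d×d complex matrix, let e be a unit vector of ℂ^{d_E}, and let U, V be unitary matrices on ℂ^d ⊗ ℂ^{d_E}. Then the generalised quantum operation output satisfies the trace-norm contraction ‖ Tr_E[ U (ρ ⊗ e e†) V† ] ‖₁ ≤ ‖ρ‖₁, where Tr_E denotes the partial trace over the second tensor factor ℂ^{d_E}. -/

import Mathlib

open Matrix
open scoped Kronecker ComplexOrder

/-- Partial trace over the second (ancilla) tensor factor. -/
noncomputable def ptraceE {ι κ : Type*} [Fintype κ] (X : Matrix (ι × κ) (ι × κ) ℂ) :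
    Matrix ι ι ℂ :=
  Matrix.of fun i j => ∑ k, X (i, k) (j, k)

/-- The trace norm `‖M‖₁ = Tr √(M Mᴴ)`. -/
noncomputable def traceNorm {m n : Type*} [Fintype m] [Fintype n] [DecidableEq m]
    (M : Matrix m n ℂ) : ℝ :=
  (((Matrix.posSemidef_self_mul_conjTranspose M).1.eigenvectorUnitary : Matrix m m ℂ) *
    Matrix.diagonal (((↑) : ℝ → ℂ) ∘ (√·) ∘ (Matrix.posSemidef_self_mul_conjTranspose M).1.eigenvalues) *
    (star (Matrix.posSemidef_self_mul_conjTranspose M).1.eigenvectorUnitary : Matrix m m ℂ)).trace.re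


/-!
Let `u₁, …, u_d` be an orthonormal eigenbasis of `ρρᴴ` and `wᵢ = ρᴴuᵢ`. Then `ρ = ∑ᵢ uᵢwᵢᴴ` with
`‖wᵢ‖ = √λᵢ`, so `‖ρ‖₁ = ∑ᵢ ‖uᵢ‖‖wᵢ‖`. Conversely, any `N = ∑ⱼ aⱼbⱼᴴ` has
`‖N‖₁ ≤ ∑ⱼ ‖aⱼ‖‖bⱼ‖`, because `‖N‖₁ = Re Tr(W N)` for the contraction `W = Nᴴ(NNᴴ)^{-1/2}`.
The operation sends `uᵢwᵢᴴ` to `∑ₖ xᵢₖyᵢₖᴴ`, where `xᵢₖ`, `yᵢₖ` are the slices of `U(uᵢ ⊗ e)` and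
`V(wᵢ ⊗ e)` at environment index `k`; by Cauchy–Schwarz `∑ₖ ‖xᵢₖ‖‖yᵢₖ‖ ≤ ‖uᵢ‖‖wᵢ‖`.
-/

open scoped MatrixOrder
open WithLp

section EuclideanNorm

variable {m n p : Type*} [Fintype m] [Fintype n] [Fintype p]

lemma ofReal_norm_toLp_sq (x : n → ℂ) : ((‖toLp 2 x‖ ^ 2 : ℝ) : ℂ) = star x ⬝ᵥ x := by
  rw [Complex.ofReal_pow, ← RCLike.ofReal_eq_complex_ofReal, ← inner_self_eq_norm_sq_to_K,
    EuclideanSpace.inner_toLp_toLp, dotProduct_comm]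

lemma norm_star_dotProduct_le (x y : n → ℂ) : ‖star x ⬝ᵥ y‖ ≤ ‖toLp 2 x‖ * ‖toLp 2 y‖ := by
  rw [dotProduct_comm, ← EuclideanSpace.inner_toLp_toLp]
  exact norm_inner_le_norm _ _

lemma star_mulVec_dotProduct_mulVec (W : Matrix m n ℂ) (x : n → ℂ) :
    star (W *ᵥ x) ⬝ᵥ (W *ᵥ x) = star x ⬝ᵥ (Wᴴ * W) *ᵥ x := by
  rw [star_mulVec, dotProduct_mulVec, vecMul_vecMul, ← dotProduct_mulVec]

lemma norm_toLp_mulVec_le [DecidableEq n] {W : Matrix m n ℂ} (hW : Wᴴ * W ≤ 1) (x : n → ℂ) :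
    ‖toLp 2 (W *ᵥ x)‖ ≤ ‖toLp 2 x‖ := by
  have h := (le_iff.mp hW).dotProduct_mulVec_nonneg x
  rw [sub_mulVec, one_mulVec, dotProduct_sub, ← star_mulVec_dotProduct_mulVec,
    ← ofReal_norm_toLp_sq, ← ofReal_norm_toLp_sq, sub_nonneg] at h
  exact pow_le_pow_iff_left₀ (norm_nonneg _) (norm_nonneg _) two_ne_zero |>.mp
    (by exact_mod_cast h)

lemma norm_toLp_mulVec_of_mem_unitaryGroup [DecidableEq n] {U : Matrix n n ℂ}
    (hU : U ∈ unitaryGroup n ℂ) (x : n → ℂ) : ‖toLp 2 (U *ᵥ x)‖ = ‖toLp 2 x‖ := by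
  refine le_antisymm (norm_toLp_mulVec_le (mem_unitaryGroup_iff'.mp hU).le x) ?_
  have hU' : Uᴴᴴ * Uᴴ ≤ 1 := by
    rw [conjTranspose_conjTranspose]
    exact (mem_unitaryGroup_iff.mp hU).le
  simpa [mulVec_mulVec, ← star_eq_conjTranspose, mem_unitaryGroup_iff'.mp hU]
    using norm_toLp_mulVec_le hU' (U *ᵥ x)

lemma norm_toLp_tensor (a : m → ℂ) (e : p → ℂ) :
    ‖toLp 2 (fun q : m × p => a q.1 * e q.2)‖ = ‖toLp 2 a‖ * ‖toLp 2 e‖ := by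
  simp only [EuclideanSpace.norm_eq, norm_mul, mul_pow, Fintype.sum_prod_type,
    ← Finset.sum_mul_sum]
  exact Real.sqrt_mul (Finset.sum_nonneg fun _ _ => by positivity) _

lemma sum_norm_toLp_slice_mul_le (x y : m × p → ℂ) :
    ∑ k, ‖toLp 2 (fun i => x (i, k))‖ * ‖toLp 2 (fun i => y (i, k))‖ ≤
      ‖toLp 2 x‖ * ‖toLp 2 y‖ := by
  simp only [EuclideanSpace.norm_eq, Fintype.sum_prod_type]
  rw [Finset.sum_comm (f := fun i k => ‖x (i, k)‖ ^ 2),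
    Finset.sum_comm (f := fun i k => ‖y (i, k)‖ ^ 2)]
  exact Real.sum_sqrt_mul_sqrt_le _ (fun _ => by positivity) fun _ => by positivity

end EuclideanNorm

section TraceNorm

variable {m n : Type*} [Fintype m] [Fintype n] [DecidableEq m]

lemma traceNorm_eq_sum_sqrt_eigenvalues (N : Matrix m n ℂ) :
    traceNorm N = ∑ i, √((posSemidef_self_mul_conjTranspose N).1.eigenvalues i) := by
  rw [traceNorm, trace_mul_cycle, Unitary.coe_star_mul_self, one_mul, trace_diagonal,
    Complex.re_sum]
  rfl

lemma traceNorm_eq_re_trace_cfc_sqrt (N : Matrix m n ℂ) :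
    traceNorm N = (cfc Real.sqrt (N * Nᴴ)).trace.re := by
  rw [(posSemidef_self_mul_conjTranspose N).1.cfc_eq]
  rfl

lemma Matrix.continuousOn_spectrum_real (P : Matrix m m ℂ) (f : ℝ → ℝ) :
    ContinuousOn f (spectrum ℝ P) :=
  finite_real_spectrum.continuousOn f

-- `x * (√x)⁻¹ = √x` holds at `x = 0` too, since `(√0)⁻¹ = 0`.
lemma cfc_sqrt_eq_mul_cfc_inv_sqrt {P : Matrix m m ℂ} (hP : P.IsHermitian) :
    cfc Real.sqrt P = P * cfc (fun x => (√x)⁻¹) P := by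
  conv_rhs => arg 1; rw [← cfc_id' ℝ P hP.isSelfAdjoint]
  rw [← cfc_mul _ _ _ (P.continuousOn_spectrum_real _) (P.continuousOn_spectrum_real _)]
  exact cfc_congr fun x _ => by rw [← div_eq_mul_inv, Real.div_sqrt]

lemma cfc_inv_sqrt_mul_mul_le_one {P : Matrix m m ℂ} (hP : P.IsHermitian) :
    cfc (fun x => (√x)⁻¹) P * P * cfc (fun x => (√x)⁻¹) P ≤ 1 := by
  conv_lhs => arg 1; arg 2; rw [← cfc_id' ℝ P hP.isSelfAdjoint]
  rw [← cfc_mul _ _ _ (P.continuousOn_spectrum_real _) (P.continuousOn_spectrum_real _),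
    ← cfc_mul _ _ _ (P.continuousOn_spectrum_real _) (P.continuousOn_spectrum_real _)]
  refine cfc_le_one _ _ fun x _ => ?_
  rw [mul_comm _ x, ← div_eq_mul_inv x, Real.div_sqrt, ← div_eq_mul_inv]
  exact div_self_le_one _

lemma exists_traceNorm_eq_re_trace_mul (N : Matrix m n ℂ) :
    ∃ W : Matrix n m ℂ, Wᴴ * W ≤ 1 ∧ traceNorm N = (W * N).trace.re := by
  have hP := (posSemidef_self_mul_conjTranspose N).1
  set S := cfc (fun x => (√x)⁻¹) (N * Nᴴ)
  have hS : Sᴴ = S := (cfc_predicate _ _ : IsSelfAdjoint S)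
  refine ⟨Nᴴ * S, ?_, ?_⟩
  · rw [conjTranspose_mul, hS, conjTranspose_conjTranspose, ← Matrix.mul_assoc,
      Matrix.mul_assoc S]
    exact cfc_inv_sqrt_mul_mul_le_one hP
  · rw [traceNorm_eq_re_trace_cfc_sqrt, cfc_sqrt_eq_mul_cfc_inv_sqrt hP, trace_mul_cycle Nᴴ]

theorem traceNorm_le_sum_of_eq_sum_vecMulVec {ι : Type*} [Fintype ι] {N : Matrix m n ℂ}
    (a : ι → m → ℂ) (b : ι → n → ℂ) (hN : N = ∑ j, vecMulVec (a j) (star (b j))) :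
    traceNorm N ≤ ∑ j, ‖toLp 2 (a j)‖ * ‖toLp 2 (b j)‖ := by
  obtain ⟨W, hW, hNW⟩ := exists_traceNorm_eq_re_trace_mul N
  have hterm (j : ι) : (W * vecMulVec (a j) (star (b j))).trace = star (b j) ⬝ᵥ W *ᵥ a j := by
    rw [mul_vecMulVec, trace_vecMulVec, dotProduct_comm]
  calc traceNorm N = ∑ j, (star (b j) ⬝ᵥ W *ᵥ a j).re := by
        rw [hNW, hN, Matrix.mul_sum, trace_sum, Complex.re_sum]
        simp only [hterm]
    _ ≤ ∑ j, ‖toLp 2 (b j)‖ * ‖toLp 2 (W *ᵥ a j)‖ := Finset.sum_le_sum fun j _ =>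
        (Complex.re_le_norm _).trans (norm_star_dotProduct_le _ _)
    _ ≤ ∑ j, ‖toLp 2 (a j)‖ * ‖toLp 2 (b j)‖ := Finset.sum_le_sum fun j _ => by
        rw [mul_comm]
        exact mul_le_mul_of_nonneg_right (norm_toLp_mulVec_le hW _) (norm_nonneg _)

end TraceNorm

section Decomposition

variable {m n : Type*} [Fintype m] [Fintype n] [DecidableEq m]

lemma sum_vecMulVec_eigenvectorBasis {A : Matrix m m ℂ} (hA : A.IsHermitian) :
    ∑ i, vecMulVec ⇑(hA.eigenvectorBasis i) (star ⇑(hA.eigenvectorBasis i)) = 1 := by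
  rw [← mem_unitaryGroup_iff.mp hA.eigenvectorUnitary.2]
  ext i j
  simp [mul_apply, Matrix.sum_apply, vecMulVec_apply]

lemma norm_toLp_conjTranspose_mulVec_eigenvectorBasis (N : Matrix m n ℂ) (i : m) :
    ‖toLp 2 (Nᴴ *ᵥ ⇑((posSemidef_self_mul_conjTranspose N).1.eigenvectorBasis i))‖ =
      √((posSemidef_self_mul_conjTranspose N).1.eigenvalues i) := by
  set hH := (posSemidef_self_mul_conjTranspose N).1
  have h := ofReal_norm_toLp_sq (Nᴴ *ᵥ ⇑(hH.eigenvectorBasis i))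
  rw [star_mulVec_dotProduct_mulVec, conjTranspose_conjTranspose, hH.mulVec_eigenvectorBasis,
    dotProduct_smul, ← ofReal_norm_toLp_sq, toLp_ofLp, hH.eigenvectorBasis.norm_eq_one,
    one_pow, Complex.ofReal_one, Complex.real_smul, mul_one, Complex.ofReal_inj] at h
  rw [← h, Real.sqrt_sq (norm_nonneg _)]

theorem exists_eq_sum_vecMulVec_and_traceNorm_eq (ρ : Matrix m n ℂ) :
    ∃ u : m → m → ℂ, (∀ i, ‖toLp 2 (u i)‖ = 1) ∧
      ρ = ∑ i, vecMulVec (u i) (star (ρᴴ *ᵥ u i)) ∧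
      traceNorm ρ = ∑ i, ‖toLp 2 (ρᴴ *ᵥ u i)‖ := by
  set hH := (posSemidef_self_mul_conjTranspose ρ).1
  refine ⟨fun i => hH.eigenvectorBasis i, fun i => by simp, ?_, ?_⟩
  · simp only [star_mulVec, conjTranspose_conjTranspose, ← vecMulVec_mul, ← Matrix.sum_mul,
      sum_vecMulVec_eigenvectorBasis, Matrix.one_mul]
  · simp only [norm_toLp_conjTranspose_mulVec_eigenvectorBasis, traceNorm_eq_sum_sqrt_eigenvalues]

end Decomposition

section RankOne

variable {α : Type*} [CommSemiring α] {l m n p : Type*}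

lemma sum_kronecker {τ : Type*} (s : Finset τ) (A : τ → Matrix l m α) (B : Matrix n p α) :
    (∑ j ∈ s, A j) ⊗ₖ B = ∑ j ∈ s, A j ⊗ₖ B := by
  ext q r
  simp only [kroneckerMap_apply, Matrix.sum_apply, Finset.sum_mul]

variable [StarRing α]

lemma mul_vecMulVec_star_mul_conjTranspose [Fintype m] (U : Matrix l m α) (V : Matrix n m α)
    (x y : m → α) : U * vecMulVec x (star y) * Vᴴ = vecMulVec (U *ᵥ x) (star (V *ᵥ y)) := by
  rw [mul_vecMulVec, vecMulVec_mul, star_mulVec]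

lemma vecMulVec_star_kronecker_vecMulVec_star (a b : m → α) (c d : p → α) :
    vecMulVec a (star b) ⊗ₖ vecMulVec c (star d) =
      vecMulVec (fun q : m × p => a q.1 * c q.2) (star fun q : m × p => b q.1 * d q.2) := by
  ext q r
  simp only [kroneckerMap_apply, vecMulVec_apply, Pi.star_apply, star_mul']
  ring

end RankOne

section PartialTrace

variable {ι κ : Type*} [Fintype κ]

lemma ptraceE_sum {τ : Type*} (s : Finset τ) (X : τ → Matrix (ι × κ) (ι × κ) ℂ) :
    ptraceE (∑ j ∈ s, X j) = ∑ j ∈ s, ptraceE (X j) := by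
  ext i i'
  simp only [ptraceE, of_apply, Matrix.sum_apply]
  exact Finset.sum_comm

lemma ptraceE_vecMulVec (x y : ι × κ → ℂ) :
    ptraceE (vecMulVec x y) = ∑ k, vecMulVec (fun i => x (i, k)) (fun i => y (i, k)) := by
  ext i i'
  simp only [ptraceE, of_apply, Matrix.sum_apply, vecMulVec_apply]

theorem traceNorm_ptraceE_le [Fintype ι] [DecidableEq ι] {τ : Type*} [Fintype τ]
    {X : Matrix (ι × κ) (ι × κ) ℂ} (a b : τ → ι × κ → ℂ)
    (hX : X = ∑ j, vecMulVec (a j) (star (b j))) :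
    traceNorm (ptraceE X) ≤ ∑ j, ‖toLp 2 (a j)‖ * ‖toLp 2 (b j)‖ := by
  have hdecomp : ptraceE X = ∑ jk : τ × κ,
      vecMulVec (fun i => a jk.1 (i, jk.2)) (star fun i => b jk.1 (i, jk.2)) := by
    simp only [hX, ptraceE_sum, ptraceE_vecMulVec, Fintype.sum_prod_type]
    rfl
  refine (traceNorm_le_sum_of_eq_sum_vecMulVec _ _ hdecomp).trans ?_
  rw [Fintype.sum_prod_type]
  exact Finset.sum_le_sum fun j _ => sum_norm_toLp_slice_mul_le (a j) (b j)

end PartialTrace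

theorem stmt9_general (d dE : ℕ)
    (ρ : Matrix (Fin d) (Fin d) ℂ)
    (e : Fin dE → ℂ) (he : star e ⬝ᵥ e = 1)
    (U V : Matrix (Fin d × Fin dE) (Fin d × Fin dE) ℂ)
    (hU : U ∈ Matrix.unitaryGroup (Fin d × Fin dE) ℂ)
    (hV : V ∈ Matrix.unitaryGroup (Fin d × Fin dE) ℂ) :
    traceNorm (ptraceE (U * (ρ ⊗ₖ Matrix.vecMulVec e (star e)) * Vᴴ)) ≤ traceNorm ρ := by
  obtain ⟨u, hu, hρ, hρ_norm⟩ := exists_eq_sum_vecMulVec_and_traceNorm_eq ρ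
  have he_norm : ‖toLp 2 e‖ = 1 := by
    rw [← ofReal_norm_toLp_sq, ← Complex.ofReal_one, Complex.ofReal_inj] at he
    exact (pow_eq_one_iff_of_nonneg (norm_nonneg _) two_ne_zero).mp he
  have hX : U * (ρ ⊗ₖ vecMulVec e (star e)) * Vᴴ = ∑ i, vecMulVec
      (U *ᵥ fun q => u i q.1 * e q.2) (star (V *ᵥ fun q => (ρᴴ *ᵥ u i) q.1 * e q.2)) := by
    conv_lhs => rw [hρ]
    simp only [sum_kronecker, vecMulVec_star_kronecker_vecMulVec_star, Matrix.mul_sum,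
      Matrix.sum_mul, mul_vecMulVec_star_mul_conjTranspose]
  refine (traceNorm_ptraceE_le _ _ hX).trans_eq ?_
  simp only [norm_toLp_mulVec_of_mem_unitaryGroup hU, norm_toLp_mulVec_of_mem_unitaryGroup hV,
    norm_toLp_tensor, he_norm, hu, hρ_norm, one_mul, mul_one]

/-- **Trace-norm contraction of generalised quantum operations.** -/
theorem stmt9 (d dE : ℕ) (hd : 0 < d) (hdE : 0 < dE)
    (ρ : Matrix (Fin d) (Fin d) ℂ)
    (e : Fin dE → ℂ) (he : star e ⬝ᵥ e = 1)
    (U V : Matrix (Fin d × Fin dE) (Fin d × Fin dE) ℂ)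
    (hU : U ∈ Matrix.unitaryGroup (Fin d × Fin dE) ℂ)
    (hV : V ∈ Matrix.unitaryGroup (Fin d × Fin dE) ℂ) :
    traceNorm (ptraceE (U * (ρ ⊗ₖ Matrix.vecMulVec e (star e)) * Vᴴ)) ≤ traceNorm ρ :=
  stmt9_general d dE ρ e he U V hU hV
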